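/- For every ε > 0 and E < ∞, setting γ = ε²/(8(3E+2)): for every pure state |ψ⟩ = Σ c_n|n⟩ with Σ n²|c_n|² ≤ E, one has ‖ρ̃₊ − N₊(γ)[ρ]/tr N₊(γ)[ρ]‖₁ ≤ √(8γ(1 + 2F₁ + F₂)/(F₁+1)) ≤ √(8γ(3E+1)) < ε, where ρ̃₊ = a†ρa/tr[a†ρa], N₊(γ)[ρ] = (e^{2γ}−1) e^{-γa†a} a† ρ a e^{-γa†a}, F₁ = Σ n|c_n|², F₂ = Σ n²|c_n|². -/

import Mathlib

open scoped InnerProductSpace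
open scoped ENNReal

/-- Trace norm of an operator, via the characterization
`‖T‖₁ = sup { ∑ᵢ |⟨fᵢ, T eᵢ⟩| : (eᵢ), (fᵢ) finite orthonormal families }`. -/
noncomputable def traceNorm {H : Type*} [NormedAddCommGroup H] [InnerProductSpace ℂ H]
    (T : H →L[ℂ] H) : ℝ :=
  ⨆ (n : ℕ) (e : Fin n → H) (f : Fin n → H) (_ : Orthonormal ℂ e)
    (_ : Orthonormal ℂ f), ∑ i, ‖⟪f i, T (e i)⟫_ℂ‖

/-- Rank-one operator `|v⟩⟨v|`. -/
noncomputable def rankOne {H : Type*} [NormedAddCommGroup H] [InnerProductSpace ℂ H]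
    (v : H) : H →L[ℂ] H :=
  (innerSL ℂ v).smulRight v

lemma lp_two_norm_sq (f : lp (fun _ : ℕ => ℂ) 2) :
    Summable (fun n : ℕ => ‖f n‖^2) ∧ (∑' n : ℕ, ‖f n‖^2) = ‖f‖^2 := by
  have h0 : (0:ℝ) < (2:ℝ≥0∞).toReal := by norm_num
  have hs := (lp.memℓp f).summable h0
  have hn := lp.norm_rpow_eq_tsum h0 f
  have hconv : ∀ x : ℝ, x ^ (2:ℝ≥0∞).toReal = x ^ 2 := fun x => by norm_num
  simp only [hconv] at hs hn
  exact ⟨hs, hn.symm⟩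

lemma sum_inner_mul_inner_le {H : Type*} [NormedAddCommGroup H] [InnerProductSpace ℂ H]
    {n : ℕ} {e f : Fin n → H} (he : Orthonormal ℂ e) (hf : Orthonormal ℂ f) (w z : H) :
    ∑ i, ‖⟪w, e i⟫_ℂ‖ * ‖⟪f i, z⟫_ℂ‖ ≤ ‖w‖ * ‖z‖ := by
  have h1 : ∑ i, ‖⟪e i, w⟫_ℂ‖ ^ 2 ≤ ‖w‖ ^ 2 := he.sum_inner_products_le w
  have h2 : ∑ i, ‖⟪f i, z⟫_ℂ‖ ^ 2 ≤ ‖z‖ ^ 2 := hf.sum_inner_products_le z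
  have hcs := Finset.sum_mul_sq_le_sq_mul_sq Finset.univ
    (fun i => ‖⟪w, e i⟫_ℂ‖) (fun i => ‖⟪f i, z⟫_ℂ‖)
  have hsymm : ∀ i, ‖⟪w, e i⟫_ℂ‖ = ‖⟪e i, w⟫_ℂ‖ := fun i => norm_inner_symm _ _
  simp only [hsymm] at hcs
  have hL : (0:ℝ) ≤ ∑ i, ‖⟪w, e i⟫_ℂ‖ * ‖⟪f i, z⟫_ℂ‖ :=
    Finset.sum_nonneg fun i _ => mul_nonneg (norm_nonneg _) (norm_nonneg _)
  simp only [hsymm]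
  nlinarith [norm_nonneg w, norm_nonneg z, mul_nonneg (norm_nonneg w) (norm_nonneg z),
    Finset.sum_nonneg (fun i (_ : i ∈ Finset.univ) => sq_nonneg ‖⟪e i, w⟫_ℂ‖),
    Finset.sum_nonneg (fun i (_ : i ∈ Finset.univ) => sq_nonneg ‖⟪f i, z⟫_ℂ‖)]

lemma traceNorm_rankOne_sub_le {H : Type*} [NormedAddCommGroup H] [InnerProductSpace ℂ H]
    (u v : H) : traceNorm (rankOne u - rankOne v) ≤ ‖u + v‖ * ‖u - v‖ := by
  have hnn : (0:ℝ) ≤ ‖u + v‖ * ‖u - v‖ := mul_nonneg (norm_nonneg _) (norm_nonneg _)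
  refine Real.iSup_le (fun n => Real.iSup_le (fun e => Real.iSup_le (fun f =>
    Real.iSup_le (fun he => Real.iSup_le (fun hf => ?_) hnn) hnn) hnn) hnn) hnn
  have key : ∀ i, ‖⟪f i, (rankOne u - rankOne v) (e i)⟫_ℂ‖ ≤
      (‖⟪u - v, e i⟫_ℂ‖ * ‖⟪f i, u + v⟫_ℂ‖ + ‖⟪u + v, e i⟫_ℂ‖ * ‖⟪f i, u - v⟫_ℂ‖) / 2 := by
    intro i
    have happ : (rankOne u - rankOne v) (e i) = ⟪u, e i⟫_ℂ • u - ⟪v, e i⟫_ℂ • v := rfl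
    rw [happ]
    have : ⟪f i, ⟪u, e i⟫_ℂ • u - ⟪v, e i⟫_ℂ • v⟫_ℂ =
        (⟪u - v, e i⟫_ℂ * ⟪f i, u + v⟫_ℂ + ⟪u + v, e i⟫_ℂ * ⟪f i, u - v⟫_ℂ) / 2 := by
      rw [inner_sub_right, inner_smul_right, inner_smul_right,
        inner_sub_left, inner_add_left, inner_add_right, inner_sub_right]
      ring
    rw [this, norm_div]
    have h2 : ‖(2:ℂ)‖ = 2 := by norm_num
    rw [h2]
    gcongr
    calc ‖⟪u - v, e i⟫_ℂ * ⟪f i, u + v⟫_ℂ + ⟪u + v, e i⟫_ℂ * ⟪f i, u - v⟫_ℂ‖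
        ≤ ‖⟪u - v, e i⟫_ℂ * ⟪f i, u + v⟫_ℂ‖ + ‖⟪u + v, e i⟫_ℂ * ⟪f i, u - v⟫_ℂ‖ :=
          norm_add_le _ _
      _ = ‖⟪u - v, e i⟫_ℂ‖ * ‖⟪f i, u + v⟫_ℂ‖ + ‖⟪u + v, e i⟫_ℂ‖ * ‖⟪f i, u - v⟫_ℂ‖ := by
          rw [norm_mul, norm_mul]
  calc ∑ i, ‖⟪f i, (rankOne u - rankOne v) (e i)⟫_ℂ‖
      ≤ ∑ i, (‖⟪u - v, e i⟫_ℂ‖ * ‖⟪f i, u + v⟫_ℂ‖ + ‖⟪u + v, e i⟫_ℂ‖ * ‖⟪f i, u - v⟫_ℂ‖) / 2 :=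
        Finset.sum_le_sum fun i _ => key i
    _ = ((∑ i, ‖⟪u - v, e i⟫_ℂ‖ * ‖⟪f i, u + v⟫_ℂ‖) +
          ∑ i, ‖⟪u + v, e i⟫_ℂ‖ * ‖⟪f i, u - v⟫_ℂ‖) / 2 := by
        rw [← Finset.sum_add_distrib, ← Finset.sum_div]
    _ ≤ (‖u - v‖ * ‖u + v‖ + ‖u + v‖ * ‖u - v‖) / 2 := by
        gcongr
        · exact sum_inner_mul_inner_le he hf _ _
        · exact sum_inner_mul_inner_le he hf _ _
    _ = ‖u + v‖ * ‖u - v‖ := by ring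

set_option maxHeartbeats 1000000 in
/-- Uniform convergence of approximate photon addition on
energy-second-moment-constrained states: with `γ = ε²/(8(3E+2))`, for every pure
state `ψ` with energy second moment `F₂ ≤ E`, the trace distance between the ideal
photon-added state (projection onto `φ`, `φ_{n+1} ∝ √(n+1) ψ_n`, `φ_0 = 0`) and the
normalized output of `N₊(γ)` (projection onto `χ`, `χ_{n+1} ∝ √(n+1) e^{-γ(n+1)} ψ_n`,
`χ_0 = 0`) is at most `√(8γ(1+2F₁+F₂)/(F₁+1)) ≤ √(8γ(3E+1)) < ε`. -/
theorem stmt_16 (ε E : ℝ) (hε : 0 < ε)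
    (ψ φ χ : lp (fun _ : ℕ => ℂ) 2) (hψ : ‖ψ‖ = 1)
    (hsm : Summable (fun n : ℕ => (n : ℝ)^2 * ‖ψ n‖^2))
    (hmoment : (∑' n : ℕ, (n : ℝ)^2 * ‖ψ n‖^2) ≤ E)
    (hφn : ‖φ‖ = 1) (hχn : ‖χ‖ = 1)
    (hφ : ∃ c : ℝ, 0 < c ∧ φ 0 = 0 ∧ ∀ n : ℕ,
      φ (n + 1) = ((c * Real.sqrt ((n : ℝ) + 1) : ℝ) : ℂ) * ψ n)
    (hχ : ∃ d : ℝ, 0 < d ∧ χ 0 = 0 ∧ ∀ n : ℕ,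
      χ (n + 1) = ((d * Real.sqrt ((n : ℝ) + 1) *
        Real.exp (-(ε^2/(8*(3*E+2)))*((n : ℝ)+1)) : ℝ) : ℂ) * ψ n) :
    traceNorm (rankOne φ - rankOne χ) ≤
        Real.sqrt (8*(ε^2/(8*(3*E+2))) *
          (1 + 2*(∑' n : ℕ, (n : ℝ) * ‖ψ n‖^2) + ∑' n : ℕ, (n : ℝ)^2 * ‖ψ n‖^2) /
            ((∑' n : ℕ, (n : ℝ) * ‖ψ n‖^2) + 1)) ∧
      Real.sqrt (8*(ε^2/(8*(3*E+2))) *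
          (1 + 2*(∑' n : ℕ, (n : ℝ) * ‖ψ n‖^2) + ∑' n : ℕ, (n : ℝ)^2 * ‖ψ n‖^2) /
            ((∑' n : ℕ, (n : ℝ) * ‖ψ n‖^2) + 1))
        ≤ Real.sqrt (8*(ε^2/(8*(3*E+2)))*(3*E+1)) ∧
      Real.sqrt (8*(ε^2/(8*(3*E+2)))*(3*E+1)) < ε := by
  have hpnn : ∀ n : ℕ, (0:ℝ) ≤ ‖ψ n‖^2 := fun n => sq_nonneg _
  have hE0 : 0 ≤ E :=
    le_trans (tsum_nonneg fun n => mul_nonneg (sq_nonneg _) (hpnn n)) hmoment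
  have hden : (0:ℝ) < 3*E+2 := by linarith
  set γ : ℝ := ε^2/(8*(3*E+2)) with hγdef
  have hγ0 : 0 < γ := div_pos (by positivity) (by linarith)
  set F1 : ℝ := ∑' n : ℕ, (n : ℝ) * ‖ψ n‖^2 with hF1def
  set F2 : ℝ := ∑' n : ℕ, (n : ℝ)^2 * ‖ψ n‖^2 with hF2def
  obtain ⟨c, hc, hφ0, hφr⟩ := hφ
  obtain ⟨d, hd, hχ0, hχr⟩ := hχ
  obtain ⟨hψs, hψ2'⟩ := lp_two_norm_sq ψ
  have hψ2 : (∑' n : ℕ, ‖ψ n‖^2) = 1 := by rw [hψ2', hψ]; norm_num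
  -- summability facts
  have hncast : ∀ n : ℕ, (n:ℝ) ≤ (n:ℝ)^2 := by
    intro n
    rcases Nat.eq_zero_or_pos n with h | h
    · simp [h]
    · have h1 : (1:ℝ) ≤ (n:ℝ) := by exact_mod_cast h
      nlinarith
  have hF1s : Summable (fun n : ℕ => (n:ℝ) * ‖ψ n‖^2) := by
    refine Summable.of_nonneg_of_le (fun n => by positivity) (fun n => ?_) hsm
    exact mul_le_mul_of_nonneg_right (hncast n) (hpnn n)
  have hF1nn : 0 ≤ F1 := tsum_nonneg fun n => by positivity
  have hF2nn : 0 ≤ F2 := tsum_nonneg fun n => by positivity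
  have hF1F2 : F1 ≤ F2 :=
    Summable.tsum_le_tsum (fun n => mul_le_mul_of_nonneg_right (hncast n) (hpnn n)) hF1s hsm
  have hqs : Summable (fun n : ℕ => ((n:ℝ)+1)^2 * ‖ψ n‖^2) :=
    ((hsm.add (hF1s.mul_left 2)).add hψs).congr fun n => by ring
  have hS0s : Summable (fun n : ℕ => ((n:ℝ)+1) * ‖ψ n‖^2) :=
    (hF1s.add hψs).congr fun n => by ring
  set S0 : ℝ := ∑' n : ℕ, ((n:ℝ)+1) * ‖ψ n‖^2 with hS0def
  have hS0 : S0 = F1 + 1 := by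
    rw [hS0def, tsum_congr (fun n : ℕ =>
      show ((n:ℝ)+1) * ‖ψ n‖^2 = (n:ℝ) * ‖ψ n‖^2 + ‖ψ n‖^2 by ring),
      Summable.tsum_add hF1s hψs, hψ2, hF1def]
  have hT : (∑' n : ℕ, ((n:ℝ)+1)^2 * ‖ψ n‖^2) = 1 + 2*F1 + F2 := by
    rw [tsum_congr (fun n : ℕ =>
      show ((n:ℝ)+1)^2 * ‖ψ n‖^2
        = (n:ℝ)^2 * ‖ψ n‖^2 + 2*((n:ℝ) * ‖ψ n‖^2) + ‖ψ n‖^2 by ring),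
      Summable.tsum_add (hsm.add (hF1s.mul_left 2)) hψs, Summable.tsum_add hsm (hF1s.mul_left 2),
      tsum_mul_left, hψ2, hF1def, hF2def]
    ring
  have hexp1 : ∀ n : ℕ, Real.exp (-γ*((n:ℝ)+1)) ≤ 1 := fun n => by
    rw [Real.exp_le_one_iff]
    have h1 : (0:ℝ) ≤ (n:ℝ)+1 := by positivity
    nlinarith [hγ0.le]
  have hexppos : ∀ n : ℕ, (0:ℝ) < Real.exp (-γ*((n:ℝ)+1)) := fun n => Real.exp_pos _
  have hS1s : Summable (fun n : ℕ => ((n:ℝ)+1) * Real.exp (-γ*((n:ℝ)+1)) * ‖ψ n‖^2) := by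
    refine Summable.of_nonneg_of_le (fun n => by positivity) (fun n => ?_) hS0s
    have h1 : ((n:ℝ)+1) * Real.exp (-γ*((n:ℝ)+1)) ≤ ((n:ℝ)+1) * 1 :=
      mul_le_mul_of_nonneg_left (hexp1 n) (by positivity)
    calc ((n:ℝ)+1) * Real.exp (-γ*((n:ℝ)+1)) * ‖ψ n‖^2
        ≤ (((n:ℝ)+1) * 1) * ‖ψ n‖^2 := mul_le_mul_of_nonneg_right h1 (hpnn n)
      _ = ((n:ℝ)+1) * ‖ψ n‖^2 := by ring
  have hexpsq : ∀ n : ℕ, Real.exp (-γ*((n:ℝ)+1))^2 ≤ 1 := fun n => by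
    nlinarith [hexp1 n, (hexppos n).le]
  have hS2s : Summable (fun n : ℕ => ((n:ℝ)+1) * Real.exp (-γ*((n:ℝ)+1))^2 * ‖ψ n‖^2) := by
    refine Summable.of_nonneg_of_le (fun n => by positivity) (fun n => ?_) hS0s
    have h2 : ((n:ℝ)+1) * Real.exp (-γ*((n:ℝ)+1))^2 ≤ ((n:ℝ)+1) * 1 :=
      mul_le_mul_of_nonneg_left (hexpsq n) (by positivity)
    calc ((n:ℝ)+1) * Real.exp (-γ*((n:ℝ)+1))^2 * ‖ψ n‖^2
        ≤ (((n:ℝ)+1) * 1) * ‖ψ n‖^2 := mul_le_mul_of_nonneg_right h2 (hpnn n)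
      _ = ((n:ℝ)+1) * ‖ψ n‖^2 := by ring
  set S1 : ℝ := ∑' n : ℕ, ((n:ℝ)+1) * Real.exp (-γ*((n:ℝ)+1)) * ‖ψ n‖^2 with hS1def
  set S2 : ℝ := ∑' n : ℕ, ((n:ℝ)+1) * Real.exp (-γ*((n:ℝ)+1))^2 * ‖ψ n‖^2 with hS2def
  have hS1nn : 0 ≤ S1 := tsum_nonneg fun n => by positivity
  have hS2leS0 : S2 ≤ S0 := by
    refine Summable.tsum_le_tsum (fun n => ?_) hS2s hS0s
    have h2 : ((n:ℝ)+1) * Real.exp (-γ*((n:ℝ)+1))^2 ≤ ((n:ℝ)+1) * 1 :=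
      mul_le_mul_of_nonneg_left (hexpsq n) (by positivity)
    calc ((n:ℝ)+1) * Real.exp (-γ*((n:ℝ)+1))^2 * ‖ψ n‖^2
        ≤ (((n:ℝ)+1) * 1) * ‖ψ n‖^2 := mul_le_mul_of_nonneg_right h2 (hpnn n)
      _ = ((n:ℝ)+1) * ‖ψ n‖^2 := by ring
  have hγT : S0 - S1 ≤ γ * (1 + 2*F1 + F2) := by
    have hle : (∑' n : ℕ, (((n:ℝ)+1) * ‖ψ n‖^2
          - ((n:ℝ)+1) * Real.exp (-γ*((n:ℝ)+1)) * ‖ψ n‖^2))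
        ≤ ∑' n : ℕ, γ * (((n:ℝ)+1)^2 * ‖ψ n‖^2) := by
      refine Summable.tsum_le_tsum (fun n => ?_) (hS0s.sub hS1s) (hqs.mul_left γ)
      have ht : 1 - Real.exp (-γ*((n:ℝ)+1)) ≤ γ*((n:ℝ)+1) := by
        have h := Real.add_one_le_exp (-(γ*((n:ℝ)+1)))
        rw [← neg_mul] at h
        linarith
      have hx : (0:ℝ) ≤ (n:ℝ)+1 := by positivity
      nlinarith [mul_le_mul_of_nonneg_right
        (mul_le_mul_of_nonneg_left ht hx) (hpnn n)]
    have heq : (∑' n : ℕ, γ * (((n:ℝ)+1)^2 * ‖ψ n‖^2)) = γ * (1 + 2*F1 + F2) := by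
      rw [tsum_mul_left, hT]
    calc S0 - S1 = ∑' n : ℕ, (((n:ℝ)+1) * ‖ψ n‖^2
          - ((n:ℝ)+1) * Real.exp (-γ*((n:ℝ)+1)) * ‖ψ n‖^2) := (Summable.tsum_sub hS0s hS1s).symm
      _ ≤ _ := hle
      _ = _ := heq
  -- norm computations
  obtain ⟨hφs, hφ2'⟩ := lp_two_norm_sq φ
  obtain ⟨hχs, hχ2'⟩ := lp_two_norm_sq χ
  have hφterm : ∀ n : ℕ, ‖φ (n+1)‖^2 = c^2 * (((n:ℝ)+1) * ‖ψ n‖^2) := by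
    intro n
    rw [hφr n, norm_mul, Complex.norm_real, Real.norm_eq_abs, abs_mul,
      abs_of_pos hc, abs_of_nonneg (Real.sqrt_nonneg _), mul_pow, mul_pow,
      Real.sq_sqrt (by positivity : (0:ℝ) ≤ (n:ℝ)+1)]
    ring
  have hχterm : ∀ n : ℕ, ‖χ (n+1)‖^2
      = d^2 * (((n:ℝ)+1) * Real.exp (-γ*((n:ℝ)+1))^2 * ‖ψ n‖^2) := by
    intro n
    rw [hχr n, norm_mul, Complex.norm_real, Real.norm_eq_abs, abs_mul, abs_mul,
      abs_of_pos hd, abs_of_nonneg (Real.sqrt_nonneg _),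
      abs_of_pos (Real.exp_pos _), mul_pow, mul_pow, mul_pow,
      Real.sq_sqrt (by positivity : (0:ℝ) ≤ (n:ℝ)+1)]
    ring
  have hcS0 : c^2 * S0 = 1 := by
    have h := Summable.tsum_eq_zero_add hφs
    rw [hφ2', hφn] at h
    have h0 : ‖φ 0‖^2 = 0 := by rw [hφ0]; simp
    rw [h0, zero_add, tsum_congr hφterm, tsum_mul_left, ← hS0def] at h
    simpa using h.symm
  have hdS2 : d^2 * S2 = 1 := by
    have h := Summable.tsum_eq_zero_add hχs
    rw [hχ2', hχn] at h
    have h0 : ‖χ 0‖^2 = 0 := by rw [hχ0]; simp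
    rw [h0, zero_add, tsum_congr hχterm, tsum_mul_left, ← hS2def] at h
    simpa using h.symm
  -- inner product
  have hconj : ∀ n : ℕ, (starRingEnd ℂ) (ψ n) * ψ n = ((‖ψ n‖^2 : ℝ) : ℂ) := by
    intro n
    rw [mul_comm, Complex.mul_conj]
    norm_cast
    rw [Complex.normSq_eq_norm_sq]
  have hinner : ⟪φ, χ⟫_ℂ = ((c*d*S1 : ℝ) : ℂ) := by
    rw [lp.inner_eq_tsum, Summable.tsum_eq_zero_add (lp.summable_inner (𝕜 := ℂ) φ χ)]
    have h0 : ⟪φ 0, χ 0⟫_ℂ = 0 := by rw [hφ0]; simp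
    rw [h0, zero_add]
    have hterm : ∀ n : ℕ, ⟪φ (n+1), χ (n+1)⟫_ℂ =
        (((c*d*(((n:ℝ)+1) * Real.exp (-γ*((n:ℝ)+1)) * ‖ψ n‖^2)) : ℝ) : ℂ) := by
      intro n
      rw [RCLike.inner_apply, hφr n, hχr n, map_mul, Complex.conj_ofReal, mul_comm]
      have hsq : Real.sqrt ((n:ℝ)+1) * Real.sqrt ((n:ℝ)+1) = (n:ℝ)+1 :=
        Real.mul_self_sqrt (by positivity)
      calc ((c * Real.sqrt ((n:ℝ)+1) : ℝ):ℂ) * (starRingEnd ℂ) (ψ n) *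
            (((d * Real.sqrt ((n:ℝ)+1) * Real.exp (-γ*((n:ℝ)+1)) : ℝ):ℂ) * ψ n)
          = (((c * Real.sqrt ((n:ℝ)+1)) *
              (d * Real.sqrt ((n:ℝ)+1) * Real.exp (-γ*((n:ℝ)+1))) : ℝ):ℂ)
              * ((starRingEnd ℂ) (ψ n) * ψ n) := by push_cast; ring
        _ = _ := by
            rw [hconj n, ← Complex.ofReal_mul]
            congr 1
            linear_combination
              (c*d*Real.exp (-γ*((n:ℝ)+1))*‖ψ n‖^2) * hsq
    rw [tsum_congr hterm, ← Complex.ofReal_tsum, tsum_mul_left, ← hS1def]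
  have hdiff : ‖φ - χ‖^2 = 2 - 2*(c*d*S1) := by
    have h := norm_sub_sq (𝕜 := ℂ) φ χ
    rw [hφn, hχn, hinner] at h
    simp only [RCLike.re_to_complex, Complex.ofReal_re, one_pow] at h
    rw [h]; ring
  -- positivity chain
  have hS0pos : 0 < S0 := by rw [hS0]; linarith
  have hS2pos : 0 < S2 := by nlinarith [mul_pos hd hd]
  have hcd : 1 ≤ c*d*S0 := by
    have h1 : (1:ℝ) ≤ d^2*S0 := by nlinarith
    have h2 : (c*d*S0)^2 = (c^2*S0)*(d^2*S0) := by ring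
    have h3 : 0 < c*d*S0 := by positivity
    nlinarith [h1, h2, h3, hcS0]
  have hS1cd : S1 ≤ c*d*S1*S0 := by nlinarith [hcd, hS1nn]
  refine ⟨?_, ?_, ?_⟩
  · calc traceNorm (rankOne φ - rankOne χ)
        ≤ ‖φ + χ‖ * ‖φ - χ‖ := traceNorm_rankOne_sub_le φ χ
      _ ≤ 2 * ‖φ - χ‖ := by
          have h2 : ‖φ + χ‖ ≤ 2 := by
            calc ‖φ + χ‖ ≤ ‖φ‖ + ‖χ‖ := norm_add_le _ _
              _ = 2 := by rw [hφn, hχn]; norm_num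
          exact mul_le_mul_of_nonneg_right h2 (norm_nonneg _)
      _ = Real.sqrt ((2 * ‖φ - χ‖)^2) := (Real.sqrt_sq (by positivity)).symm
      _ ≤ Real.sqrt (8*γ * (1 + 2*F1 + F2) / (F1+1)) := by
          apply Real.sqrt_le_sqrt
          have hx : (2 * ‖φ - χ‖)^2 = 8*(1 - c*d*S1) := by
            rw [mul_pow, hdiff]; ring
          rw [hx, ← hS0, le_div_iff₀ hS0pos]
          nlinarith [hγT, hS1cd]
  · apply Real.sqrt_le_sqrt
    have hnum : (0:ℝ) ≤ 8*γ * (1 + 2*F1 + F2) :=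
      mul_nonneg (by positivity) (by linarith)
    have h1 : 8*γ * (1 + 2*F1 + F2) / (F1+1) ≤ 8*γ * (1 + 2*F1 + F2) :=
      div_le_self hnum (by linarith)
    have h3 : 1 + 2*F1 + F2 ≤ 3*E+1 := by
      have h4 := le_trans hF1F2 hmoment
      linarith [hmoment]
    have h2 : 8*γ * (1 + 2*F1 + F2) ≤ 8*γ*(3*E+1) := by nlinarith [hγ0.le, h3]
    linarith
  · rw [Real.sqrt_lt' hε]
    have h32 : (3*E+2) ≠ 0 := ne_of_gt hden
    have heq : 8*γ*(3*E+1) = ε^2*((3*E+1)/(3*E+2)) := by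
      rw [hγdef]; field_simp
    rw [heq]
    have hlt : (3*E+1)/(3*E+2) < 1 := (div_lt_one hden).mpr (by linarith)
    calc ε^2*((3*E+1)/(3*E+2)) < ε^2*1 := by
          have := mul_pos hε hε
          apply mul_lt_mul_of_pos_left hlt (by nlinarith)
      _ = ε^2 := by ring
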